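/- Let real-valued functions ctw^c satisfy the CTW recursion ctw^c_D(x) = (1/2)ξ_KT(x^c) + (1/2)ctw^{0c}_{D-1}(x)·ctw^{1c}_{D-1}(x) for D > 0 and ctw^c_0(x) = ξ_KT(x^c). Then for any complete proper suffix set S of depth ≤ D, ctw_D(x_{1:n}) ≥ 2^{-Γ_D(S)} ∏_{s∈S} ξ_KT(x^s_{1:n}), where Γ_D(S) is the description length of S and x^s denotes the subsequence of x matching context s. -/

import Mathlib

/-- Binary tree structures (PST structures / complete proper suffix sets). -/
inductive BTree where
  | leaf : BTree
  | node : BTree → BTree → BTree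
deriving DecidableEq

/-- Depth of a binary tree. -/
def BTree.depth : BTree → ℕ
  | .leaf => 0
  | .node l r => max l.depth r.depth + 1

/-- The CTW description length `Γ_D(T)`. -/
def BTree.cost : ℕ → BTree → ℕ
  | 0, _ => 0
  | _ + 1, .leaf => 1
  | D + 1, .node l r => 1 + l.cost D + r.cost D

/-- The contexts (suffixes) labelling the leaves of the tree rooted at context `c`:
left edges are labelled 1 (`true`) and right edges 0 (`false`). -/
def BTree.leafContexts : BTree → List Bool → List (List Bool)
  | .leaf, c => [c]
  | .node l r, c => l.leafContexts (true :: c) ++ r.leafContexts (false :: c)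

/-!
Each step of the CTW recursion is the average of two nonnegative terms, so `ctw (D + 1) c` is at
least half of either one. Unfolding the recursion along `T` and keeping, at every node, the term
that `T` selects (the `ξ` term at a leaf, the product of the two children at an internal node)
loses a factor `1/2` for each node above depth `D`, which is exactly `2 ^ (-Γ_D(T))`.
-/

namespace BTree

lemma prod_map_leafContexts_nonneg {ξ : List Bool → ℝ} (hξ : ∀ c, 0 ≤ ξ c)
    (T : BTree) (c : List Bool) : 0 ≤ ((T.leafContexts c).map ξ).prod :=
  List.prod_nonneg fun _ hx => by
    obtain ⟨s, -, rfl⟩ := List.mem_map.mp hx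
    exact hξ s

end BTree

section CTW

variable {ξ : List Bool → ℝ} {ctw : ℕ → List Bool → ℝ}

lemma ctw_nonneg
    (hrec : ∀ D c, ctw (D + 1) c = 1/2 * ξ c + 1/2 * ctw D (false :: c) * ctw D (true :: c))
    (hξ : ∀ c, 0 ≤ ξ c) (hbase : ∀ c, ctw 0 c = ξ c) :
    ∀ D c, 0 ≤ ctw D c
  | 0, c => (hbase c).symm ▸ hξ c
  | D + 1, c => by
    rw [hrec]
    have := ctw_nonneg hrec hξ hbase D (false :: c)
    have := ctw_nonneg hrec hξ hbase D (true :: c)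
    have := hξ c
    positivity

lemma half_mul_le_ctw_succ {D : ℕ} {c : List Bool}
    (hrec : ctw (D + 1) c = 1/2 * ξ c + 1/2 * ctw D (false :: c) * ctw D (true :: c))
    (hsplit : 0 ≤ ctw D (false :: c) * ctw D (true :: c)) :
    1/2 * ξ c ≤ ctw (D + 1) c := by
  rw [hrec]
  linarith

lemma half_mul_ctw_mul_ctw_le_ctw_succ {D : ℕ} {c : List Bool}
    (hrec : ctw (D + 1) c = 1/2 * ξ c + 1/2 * ctw D (false :: c) * ctw D (true :: c))
    (hξc : 0 ≤ ξ c) :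
    1/2 * ctw D (false :: c) * ctw D (true :: c) ≤ ctw (D + 1) c := by
  rw [hrec]
  linarith

theorem inv_two_pow_cost_mul_prod_le_ctw
    (hrec : ∀ D c, ctw (D + 1) c = 1/2 * ξ c + 1/2 * ctw D (false :: c) * ctw D (true :: c))
    (hξ : ∀ c, 0 ≤ ξ c) (hbase : ∀ c, ctw 0 c = ξ c)
    (T : BTree) {D : ℕ} (c : List Bool) (hdepth : T.depth ≤ D) :
    ((2 : ℝ) ^ T.cost D)⁻¹ * ((T.leafContexts c).map ξ).prod ≤ ctw D c := by
  have hctw := ctw_nonneg hrec hξ hbase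
  induction T generalizing D c with
  | leaf =>
    cases D with
    | zero => simp [BTree.cost, BTree.leafContexts, hbase]
    | succ D =>
      simpa [BTree.cost, BTree.leafContexts] using
        half_mul_le_ctw_succ (hrec D c) (mul_nonneg (hctw D _) (hctw D _))
  | node l r ihl ihr =>
    cases D with
    | zero => simp [BTree.depth] at hdepth
    | succ D =>
      obtain ⟨hl, hr⟩ : l.depth ≤ D ∧ r.depth ≤ D := by
        simpa [BTree.depth] using hdepth
      have hPl := BTree.prod_map_leafContexts_nonneg hξ l (true :: c)
      have hPr := BTree.prod_map_leafContexts_nonneg hξ r (false :: c)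
      simp only [BTree.cost, BTree.leafContexts, List.map_append, List.prod_append]
      calc ((2 : ℝ) ^ (1 + l.cost D + r.cost D))⁻¹ *
            (((l.leafContexts (true :: c)).map ξ).prod * ((r.leafContexts (false :: c)).map ξ).prod)
          = 1/2 * (((2 : ℝ) ^ r.cost D)⁻¹ * ((r.leafContexts (false :: c)).map ξ).prod) *
              (((2 : ℝ) ^ l.cost D)⁻¹ * ((l.leafContexts (true :: c)).map ξ).prod) := by
            rw [pow_add, pow_add]
            ring
        _ ≤ 1/2 * ctw D (false :: c) * ctw D (true :: c) := by
            gcongr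
            · exact mul_nonneg (by norm_num) (hctw D _)
            · exact ihr _ hr
            · exact ihl _ hl
        _ ≤ ctw (D + 1) c := half_mul_ctw_mul_ctw_le_ctw_succ (hrec D c) (hξ c)

end CTW

/-- The CTW lower bound (model redundancy): if `ctw` satisfies the CTW recursion
`ctw^c_D(x) = (1/2)ξ_KT(x^c) + (1/2)ctw^{0c}_{D-1}(x)·ctw^{1c}_{D-1}(x)` with base
case `ctw^c_0(x) = ξ_KT(x^c)`, and all `ξ_KT` values are positive, then for any
complete proper suffix set `S` (given by a tree `T`) of depth ≤ D,
`ctw_D(x) ≥ 2^{-Γ_D(S)} ∏_{s∈S} ξ_KT(x^s)`. Here `ξ c` denotes `ξ_KT(x^c)`. -/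
theorem ctw_model_redundancy (ξ : List Bool → ℝ) (ctw : ℕ → List Bool → ℝ)
    (hpos : ∀ c, 0 < ξ c)
    (hbase : ∀ c, ctw 0 c = ξ c)
    (hrec : ∀ D c, ctw (D + 1) c =
      1/2 * ξ c + 1/2 * ctw D (false :: c) * ctw D (true :: c))
    (T : BTree) (D : ℕ) (hdepth : T.depth ≤ D) :
    ((2 : ℝ) ^ T.cost D)⁻¹ * ((T.leafContexts []).map ξ).prod ≤ ctw D [] :=
  inv_two_pow_cost_mul_prod_le_ctw hrec (fun c => (hpos c).le) hbase T [] hdepth
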